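/- arXiv:0901.4137 — 5 statements merged into one kernel-verified Lean document; each statement's English description precedes it below -/
import Mathlib

section
/- Let f:[0,1]→ℝ be concave and define F(u) = Σ_{i=1}^d f(u_i) on the simplex Δ' = {u ∈ ℝ^d : u_i ≥ u_i^0 for all i, Σ_i u_i = 1}, where u_i^0 = n_i/(n+s) with n_i ≥ 0, n = Σ_i n_i, s > 0. Then the minimum of F over Δ' is attained at a vertex of Δ', namely at the point u with u_j = u_j^0 + s/(n+s) for j = argmax_i n_i and u_i = u_i^0 for i ≠ j. -/
/-!
Write `b i = n i / (N + s)` and `σ = s / (N + s)`, so that `Δ'` is the set of `b + t` with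
`t ≥ 0` and `∑ t i = σ`, and every `t i ≤ σ`. By concavity `f (b i + t i)` lies above the chord
of `f` over `[b i, b i + σ]`, whose increment `f (b i + σ) - f (b i)` is in turn at least the
increment at the largest `b j`, since concave functions have decreasing increments. Summing over
`i` with `∑ t i / σ = 1` bounds `F u` below by `∑ f (b i) + f (b j + σ) - f (b j)`, which is `F` at
the vertex `b + σ e_j`.
-/

open Finset

namespace ConcaveOn

variable {D : Set ℝ} {f : ℝ → ℝ}

theorem add_div_mul_sub_le_map_add (hf : ConcaveOn ℝ D f) {x h t : ℝ} (hx : x ∈ D)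
    (hxh : x + h ∈ D) (hh : 0 < h) (ht₀ : 0 ≤ t) (hth : t ≤ h) :
    f x + t / h * (f (x + h) - f x) ≤ f (x + t) := by
  have hw : 0 ≤ t / h := div_nonneg ht₀ hh.le
  have hw' : 0 ≤ 1 - t / h := sub_nonneg.2 (div_le_one_of_le₀ hth hh.le)
  have hpoint : (1 - t / h) * x + t / h * (x + h) = x + t := by field_simp; ring
  have hchord := hf.2 hx hxh hw' hw (sub_add_cancel 1 _)
  simp only [smul_eq_mul, hpoint] at hchord
  linarith

theorem map_add_sub_le_of_le (hf : ConcaveOn ℝ D f) {x y h : ℝ} (hx : x ∈ D) (hyh : y + h ∈ D)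
    (hh : 0 < h) (hxy : x ≤ y) :
    f (y + h) - f y ≤ f (x + h) - f x := by
  -- `x + h` and `y` cut the chord over `[x, y + h]` with complementary weights.
  have hL : 0 < y - x + h := by linarith
  have hend : x + (y - x + h) ∈ D := by rwa [show x + (y - x + h) = y + h by ring]
  have h₁ := hf.add_div_mul_sub_le_map_add hx hend hL hh.le (by linarith)
  have h₂ := hf.add_div_mul_sub_le_map_add hx hend hL (sub_nonneg.2 hxy) (by linarith)
  rw [show x + (y - x + h) = y + h by ring] at h₁ h₂
  rw [add_sub_cancel] at h₂
  have hweights : h / (y - x + h) + (y - x) / (y - x + h) = 1 := by field_simp; ring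
  linear_combination h₁ + h₂ - (f (y + h) - f x) * hweights

end ConcaveOn

section ShiftedSimplex

variable {ι : Type*} [Fintype ι]

def shiftedSimplex (b : ι → ℝ) (σ : ℝ) : Set (ι → ℝ) :=
  {u | (∀ i, b i ≤ u i) ∧ ∑ i, u i = ∑ i, b i + σ}

theorem sum_sub_eq_of_mem_shiftedSimplex {b u : ι → ℝ} {σ : ℝ} (hu : u ∈ shiftedSimplex b σ) :
    ∑ i, (u i - b i) = σ := by
  rw [sum_sub_distrib, hu.2]
  ring

theorem le_add_of_mem_shiftedSimplex {b u : ι → ℝ} {σ : ℝ} (hu : u ∈ shiftedSimplex b σ)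
    (i : ι) : u i ≤ b i + σ := by
  have := single_le_sum (fun k _ => sub_nonneg.2 (hu.1 k)) (mem_univ i)
  rw [sum_sub_eq_of_mem_shiftedSimplex hu] at this
  linarith

variable [DecidableEq ι]

theorem add_single_mem_shiftedSimplex (b : ι → ℝ) {σ : ℝ} (hσ : 0 ≤ σ) (j : ι) :
    b + Pi.single j σ ∈ shiftedSimplex b σ := by
  refine ⟨fun i => ?_, ?_⟩
  · by_cases hi : i = j <;> simp [hi, hσ]
  · simp [sum_add_distrib]

theorem ConcaveOn.isMinOn_sum_shiftedSimplex {D : Set ℝ} {f : ℝ → ℝ} (hf : ConcaveOn ℝ D f)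
    {b : ι → ℝ} {σ : ℝ} (hσ : 0 < σ) {j : ι} (hj : ∀ i, b i ≤ b j) (hb : ∀ i, b i ∈ D)
    (hbj : b j + σ ∈ D) :
    IsMinOn (fun u => ∑ i, f (u i)) (shiftedSimplex b σ) (b + Pi.single j σ) := by
  have hbσ (i : ι) : b i + σ ∈ D :=
    hf.1.ordConnected.out (hb i) hbj ⟨by linarith, by linarith [hj i]⟩
  have hvertex :
      ∑ i, f ((b + Pi.single j σ : ι → ℝ) i) = ∑ i, f (b i) + (f (b j + σ) - f (b j)) := by
    rw [← sub_eq_iff_eq_add', ← sum_sub_distrib,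
      Fintype.sum_eq_single j fun i hi => by simp [hi]]
    simp
  refine isMinOn_iff.2 fun u hu => ?_
  have hlower (i : ι) :
      f (b i) + (u i - b i) / σ * (f (b j + σ) - f (b j)) ≤ f (u i) := calc
    _ ≤ f (b i) + (u i - b i) / σ * (f (b i + σ) - f (b i)) := by
      gcongr f (b i) + _ * ?_
      · exact div_nonneg (sub_nonneg.2 (hu.1 i)) hσ.le
      · exact hf.map_add_sub_le_of_le (hb i) hbj hσ (hj i)
    _ ≤ f (b i + (u i - b i)) := hf.add_div_mul_sub_le_map_add (hb i) (hbσ i) hσ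
        (sub_nonneg.2 (hu.1 i)) (by linarith [le_add_of_mem_shiftedSimplex hu i])
    _ = f (u i) := by rw [add_sub_cancel]
  calc ∑ i, f ((b + Pi.single j σ : ι → ℝ) i)
      = ∑ i, (f (b i) + (u i - b i) / σ * (f (b j + σ) - f (b j))) := by
        rw [hvertex, sum_add_distrib, ← sum_mul, ← sum_div,
          sum_sub_eq_of_mem_shiftedSimplex hu, div_self hσ.ne', one_mul]
    _ ≤ ∑ i, f (u i) := sum_le_sum fun i _ => hlower i

end ShiftedSimplex

theorem idm_concave_min_at_vertex_general
    (d : ℕ) (n : Fin d → ℝ) (hn : ∀ i, 0 ≤ n i) (s : ℝ) (hs : 0 < s)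
    (f : ℝ → ℝ) (hf : ConcaveOn ℝ (Set.Icc (0:ℝ) 1) f)
    (N : ℝ) (hN : N = ∑ i, n i)
    (j : Fin d) (hj : ∀ i, n i ≤ n j)
    (Δ' : Set (Fin d → ℝ))
    (hΔ' : Δ' = {u | (∀ i, n i / (N + s) ≤ u i) ∧ ∑ i, u i = 1})
    (umin : Fin d → ℝ)
    (humin : umin = fun i => n i / (N + s) + (if i = j then s / (N + s) else 0)) :
    umin ∈ Δ' ∧ ∀ u ∈ Δ', ∑ i, f (umin i) ≤ ∑ i, f (u i) := by
  have hNs : 0 < N + s := by linarith [hN ▸ sum_nonneg fun i _ => hn i]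
  set b : Fin d → ℝ := fun i => n i / (N + s)
  set σ := s / (N + s)
  have hσ : 0 < σ := div_pos hs hNs
  have hΔ : Δ' = shiftedSimplex b σ := by
    rw [hΔ', shiftedSimplex, ← sum_div, ← hN, ← add_div, div_self hNs.ne']
  have humin' : umin = b + Pi.single j σ := by
    ext i
    simp [humin, b, Pi.single_apply]
  have hbj : b j + σ ≤ 1 := by
    rw [← add_div, div_le_one hNs]
    linarith [hN ▸ single_le_sum (fun i _ => hn i) (mem_univ j)]
  have hb_le (i : Fin d) : b i ≤ b j := div_le_div_of_nonneg_right (hj i) hNs.le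
  have hb (i : Fin d) : b i ∈ Set.Icc (0:ℝ) 1 :=
    ⟨div_nonneg (hn i) hNs.le, by linarith [hb_le i]⟩
  rw [hΔ, humin']
  exact ⟨add_single_mem_shiftedSimplex b hσ.le j, isMinOn_iff.1 <|
    hf.isMinOn_sum_shiftedSimplex hσ hb_le hb ⟨by linarith [(hb j).1], hbj⟩⟩

/-- For concave `f`, `F(u) = ∑ f(u i)` attains its minimum over the
shifted simplex `Δ' = {u : u i ≥ n i / (N + s), ∑ u i = 1}` at the vertex obtained by
putting all the slack `σ = s/(N+s)` on a coordinate `j` with maximal count `n j`. -/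
theorem idm_concave_min_at_vertex
    (d : ℕ) (hd : 0 < d) (n : Fin d → ℝ) (hn : ∀ i, 0 ≤ n i) (s : ℝ) (hs : 0 < s)
    (f : ℝ → ℝ) (hf : ConcaveOn ℝ (Set.Icc (0:ℝ) 1) f)
    (N : ℝ) (hN : N = ∑ i, n i)
    (j : Fin d) (hj : ∀ i, n i ≤ n j)
    (Δ' : Set (Fin d → ℝ))
    (hΔ' : Δ' = {u | (∀ i, n i / (N + s) ≤ u i) ∧ ∑ i, u i = 1})
    (umin : Fin d → ℝ)
    (humin : umin = fun i => n i / (N + s) + (if i = j then s / (N + s) else 0)) :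
    umin ∈ Δ' ∧ ∀ u ∈ Δ', ∑ i, f (umin i) ≤ ∑ i, f (u i) :=
  idm_concave_min_at_vertex_general d n hn s hs f hf N hN j hj Δ' hΔ' umin humin
end

section
/- Let f:[0,1]→ℝ be strictly concave and F(u) = Σ_{i=1}^d f(u_i) on Δ' = {u : u_i ≥ u_i^0, Σ u_i = 1} with u_i^0 = n_i/(n+s). If u* ∈ Δ' maximizes F, then for every index k with u*_k > u_k^0 and every index j one has u*_k ≤ u*_j, i.e., all coordinates k with u*_k > u_k^0 share the common minimal value of the coordinates of u*. -/
/-- For strictly concave `f`, at a maximizer `u*` of `F(u) = ∑ f(u i)` over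
the shifted simplex `Δ'`, every coordinate `k` with `u* k > u0 k` (i.e. `t k > 0`) is
minimal among the coordinates of `u*`. -/
theorem idm_max_coords_minimal
    (d : ℕ) (hd : 0 < d) (n : Fin d → ℝ) (hn : ∀ i, 0 ≤ n i) (s : ℝ) (hs : 0 < s)
    (f : ℝ → ℝ) (hf : StrictConcaveOn ℝ (Set.Icc (0:ℝ) 1) f)
    (N : ℝ) (hN : N = ∑ i, n i)
    (u0 : Fin d → ℝ) (hu0 : u0 = fun i => n i / (N + s))
    (Δ' : Set (Fin d → ℝ))
    (hΔ' : Δ' = {u | (∀ i, u0 i ≤ u i) ∧ ∑ i, u i = 1})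
    (ustar : Fin d → ℝ) (hmem : ustar ∈ Δ')
    (hmax : ∀ u ∈ Δ', ∑ i, f (u i) ≤ ∑ i, f (ustar i)) :
    ∀ k, u0 k < ustar k → ∀ j, ustar k ≤ ustar j := by
  intro k hk j
  by_contra hlt
  push_neg at hlt
  have hmem' := hmem
  rw [hΔ'] at hmem'
  obtain ⟨hge, hsum⟩ := hmem'
  have hNs : 0 < N + s := by
    have : 0 ≤ N := by rw [hN]; exact Finset.sum_nonneg fun i _ => hn i
    linarith
  have hu0nn : ∀ i, 0 ≤ u0 i := by
    intro i; rw [hu0]; exact div_nonneg (hn i) hNs.le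
  have hnn : ∀ i, 0 ≤ ustar i := fun i => le_trans (hu0nn i) (hge i)
  have hle1 : ∀ i, ustar i ≤ 1 := by
    intro i
    have := Finset.single_le_sum (f := ustar) (fun m _ => hnn m) (Finset.mem_univ i)
    linarith
  have hjk : j ≠ k := by
    intro h; rw [h] at hlt; exact lt_irrefl _ hlt
  set ε := min (ustar k - u0 k) ((ustar k - ustar j) / 2) with hε
  have hε0 : 0 < ε := lt_min (by linarith) (by linarith)
  have hε1 : ε ≤ ustar k - u0 k := min_le_left _ _
  have hε2 : ε ≤ (ustar k - ustar j) / 2 := min_le_right _ _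
  set u' := Function.update (Function.update ustar j (ustar j + ε)) k (ustar k - ε) with hu'
  have hu'k : u' k = ustar k - ε := by simp [hu']
  have hu'j : u' j = ustar j + ε := by
    simp [hu', Function.update_of_ne hjk]
  have hu'o : ∀ i, i ≠ j → i ≠ k → u' i = ustar i := by
    intro i h1 h2
    simp [hu', Function.update_of_ne h2, Function.update_of_ne h1]
  have hjmem : j ∈ Finset.univ.erase k := Finset.mem_erase.mpr ⟨hjk, Finset.mem_univ j⟩
  -- decompose sums
  have key : ∀ g : Fin d → ℝ, ∑ i, g i = g k + (g j + ∑ i ∈ (Finset.univ.erase k).erase j, g i) := by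
    intro g
    rw [Finset.add_sum_erase _ g hjmem, Finset.add_sum_erase _ g (Finset.mem_univ k)]
  have hsame : ∀ i ∈ (Finset.univ.erase k).erase j, u' i = ustar i := by
    intro i hi
    exact hu'o i (Finset.ne_of_mem_erase hi) (Finset.ne_of_mem_erase (Finset.mem_of_mem_erase hi))
  -- u' ∈ Δ'
  have hmemu' : u' ∈ Δ' := by
    rw [hΔ']
    constructor
    · intro i
      by_cases h1 : i = k
      · rw [h1, hu'k]; linarith
      · by_cases h2 : i = j
        · rw [h2, hu'j]; have := hge j; linarith
        · rw [hu'o i h2 h1]; exact hge i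
    · rw [key u', key ustar] at *
      rw [Finset.sum_congr rfl hsame, hu'k, hu'j]
      linarith
  -- strict concavity exchange
  set x := ustar j
  set y := ustar k
  set lam := ε / (y - x) with hlam
  have hyx : 0 < y - x := by simp only [x, y]; linarith
  have hlam0 : 0 < lam := div_pos hε0 hyx
  have hlam1 : lam < 1 := by
    rw [hlam, div_lt_one hyx]; simp only [x, y] at *; linarith
  have hxmem : x ∈ Set.Icc (0:ℝ) 1 := ⟨hnn j, hle1 j⟩
  have hymem : y ∈ Set.Icc (0:ℝ) 1 := ⟨hnn k, hle1 k⟩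
  have hne : x ≠ y := ne_of_lt (by simp only [x, y]; linarith)
  have hcomb1 : (1 - lam) * x + lam * y = x + ε := by
    have : lam * (y - x) = ε := div_mul_cancel₀ ε (ne_of_gt hyx)
    nlinarith [this]
  have hcomb2 : lam * x + (1 - lam) * y = y - ε := by
    have : lam * (y - x) = ε := div_mul_cancel₀ ε (ne_of_gt hyx)
    nlinarith [this]
  have h1 : (1 - lam) * f x + lam * f y < f (x + ε) := by
    have := hf.2 hxmem hymem hne (show (0:ℝ) < 1 - lam by linarith) hlam0 (by ring)
    simpa [smul_eq_mul, hcomb1] using this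
  have h2 : lam * f x + (1 - lam) * f y < f (y - ε) := by
    have := hf.2 hxmem hymem hne hlam0 (show (0:ℝ) < 1 - lam by linarith) (by ring)
    simpa [smul_eq_mul, hcomb2] using this
  have hfsum : ∑ i, f (ustar i) < ∑ i, f (u' i) := by
    rw [key (fun i => f (u' i)), key (fun i => f (ustar i))]
    have hR : ∑ i ∈ (Finset.univ.erase k).erase j, f (u' i)
        = ∑ i ∈ (Finset.univ.erase k).erase j, f (ustar i) :=
      Finset.sum_congr rfl fun i hi => by rw [hsame i hi]
    simp only [hu'k, hu'j, hR]
    simp only [x, y] at h1 h2 ⊢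
    linarith
  exact absurd (hmax u' hmemu') (not_le.mpr hfsum)
end

section
/- Let n_{i_1} ≤ n_{i_2} ≤ ... ≤ n_{i_d} be a nondecreasing ordering of nonnegative reals, n = Σ_k n_{i_k}, s > 0, and define g(m) = (s + Σ_{k≤m} n_{i_k})/(m(n+s)) for m ∈ {1,...,d}. If there is a unique minimal value n_{i_1} and n_{i_2} - n_{i_1} ≥ s, then g attains its minimum over m ∈ {1,...,d} at m = 1. -/
/-- With sorted nonnegative counts `ν 0 ≤ ν 1 ≤ ...` (indexed from 0),
total `N`, and `g m = (s + ∑_{k < m} ν k)/(m (N+s))` for `1 ≤ m ≤ d`: if the smallest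
count is uniquely minimal with gap at least `s` to the second smallest
(`ν 1 - ν 0 ≥ s` and `ν 0 < ν 1`), then `g` is minimized at `m = 1`. -/
theorem idm_entropy_max_corner_condition
    (d : ℕ) (hd : 2 ≤ d) (ν : ℕ → ℝ) (hnn : ∀ k < d, 0 ≤ ν k)
    (hmono : ∀ k, ∀ l, k ≤ l → l < d → ν k ≤ ν l)
    (N : ℝ) (hN : N = ∑ k ∈ Finset.range d, ν k)
    (s : ℝ) (hs : 0 < s)
    (huniq : ν 0 < ν 1) (hgap : s ≤ ν 1 - ν 0)
    (g : ℕ → ℝ)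
    (hg : g = fun m => (s + ∑ k ∈ Finset.range m, ν k) / (m * (N + s))) :
    ∀ m, 1 ≤ m → m ≤ d → g 1 ≤ g m := by
  intro m h1 hm
  have hN0 : 0 ≤ N := by
    rw [hN]
    exact Finset.sum_nonneg fun k hk => hnn k (Finset.mem_range.mp hk)
  have hNs : 0 < N + s := by linarith
  have hmpos : (0:ℝ) < (m:ℝ) := by exact_mod_cast Nat.lt_of_lt_of_le Nat.zero_lt_one h1
  -- key sum bound
  have hkey : ∀ k ∈ Finset.Ico 1 m, ν 0 + s ≤ ν k := by
    intro k hk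
    obtain ⟨hk1, hk2⟩ := Finset.mem_Ico.mp hk
    have := hmono 1 k hk1 (lt_of_lt_of_le hk2 hm)
    linarith
  have hsum : (m - 1 : ℝ) * (ν 0 + s) ≤ ∑ k ∈ Finset.Ico 1 m, ν k := by
    have h := Finset.sum_le_sum hkey
    rw [Finset.sum_const, Nat.card_Ico, nsmul_eq_mul] at h
    have : ((m - 1 : ℕ) : ℝ) = (m : ℝ) - 1 := by
      have : (1:ℕ) ≤ m := h1
      push_cast [Nat.cast_sub this]
      ring
    rw [this] at h
    exact h
  have hsplit : ∑ k ∈ Finset.range m, ν k = ν 0 + ∑ k ∈ Finset.Ico 1 m, ν k := by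
    rw [Finset.range_eq_Ico, Finset.sum_eq_sum_Ico_succ_bot (Nat.lt_of_lt_of_le Nat.zero_lt_one h1)]
  rw [hg]
  simp only
  rw [div_le_div_iff₀ (by push_cast; linarith) (by positivity)]
  have hone : ∑ k ∈ Finset.range 1, ν k = ν 0 := by simp
  rw [hone, hsplit]
  have h2 : (s + ν 0) * (m:ℝ) ≤ s + (ν 0 + ∑ k ∈ Finset.Ico 1 m, ν k) := by nlinarith [hsum]
  push_cast
  nlinarith [mul_le_mul_of_nonneg_right h2 hNs.le]
end

section
/- Define h(u) = u·(ψ(n+s+1) − ψ((n+s)u+1)) for u ∈ [0,1], where ψ is the digamma function and n+s > 0 is fixed. Then h is strictly concave on (0,1), i.e., h''(u) < 0 for u ∈ (0,1). -/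
/-! With `c = n + s` and `y = c u + 1`, differentiating twice gives
`h''(u) = -c (2 ψ'(y) + (y - 1) ψ''(y))`. Writing `ζ(m, y) = ∑ₖ (y + k)⁻ᵐ` (Hurwitz zeta),
`ψ' = ζ(2, ·)` and `ψ'' = -2 ζ(3, ·)`, so `h''(u) = -2c (ζ(2, y) - (y - 1) ζ(3, y))`, which is
negative because `(y - 1)/(y + k)³ < 1/(y + k)²` term by term.

The series for `ψ` is obtained by differentiating the Bohr–Mollerup limit
`log Γ(x) = lim logGammaSeq x n`: the derivatives of `logGammaSeq · n` converge uniformly on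
bounded subintervals of `(0, ∞)`. -/

/-- The digamma function `ψ = (log ∘ Γ)'`. -/
noncomputable def digamma (x : ℝ) : ℝ := deriv (fun y => Real.log (Real.Gamma y)) x

open Real Filter Topology Set

noncomputable def hurwitzSum (m : ℕ) (x : ℝ) : ℝ := ∑' k : ℕ, 1 / (x + k) ^ m

lemma summable_one_div_add_pow {m : ℕ} (hm : 2 ≤ m) (x : ℝ) :
    Summable fun k : ℕ => 1 / (x + k) ^ m := by
  refine ((Real.summable_one_div_nat_add_rpow x m).2 (by exact_mod_cast hm)).of_norm_bounded
    fun k => ?_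
  rw [rpow_natCast, norm_div, norm_one, norm_pow, norm_eq_abs, add_comm]

lemma hasDerivAt_one_div_add_pow (m : ℕ) {a x : ℝ} (hx : x + a ≠ 0) :
    HasDerivAt (fun y => 1 / (y + a) ^ m) (-m / (x + a) ^ (m + 1)) x := by
  have h := (hasDerivAt_zpow (-m) (x + a) (.inl hx)).comp x ((hasDerivAt_id' x).add_const a)
  simp only [zpow_neg, zpow_natCast, Function.comp_def] at h
  simp only [one_div]
  refine h.congr_deriv ?_
  rw [show -(m : ℤ) - 1 = -((m + 1 : ℕ) : ℤ) by push_cast; ring, zpow_neg, zpow_natCast]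
  push_cast
  ring

lemma hasDerivAt_hurwitzSum {m : ℕ} (hm : 2 ≤ m) {x : ℝ} (hx : 0 < x) :
    HasDerivAt (hurwitzSum m) (-m * hurwitzSum (m + 1) x) x := by
  have hx2 : x ∈ Ioi (x / 2) := mem_Ioi.2 (half_lt_self hx)
  have hpos : ∀ y ∈ Ioi (x / 2), ∀ k : ℕ, 0 < y + k := fun y hy k => by
    have : 0 < y := lt_trans (half_pos hx) hy
    positivity
  have hbound : ∀ (k : ℕ), ∀ y ∈ Ioi (x / 2),
      ‖-(m : ℝ) / (y + k) ^ (m + 1)‖ ≤ m * (1 / (x / 2 + k) ^ (m + 1)) := fun k y hy => by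
    have hxk := hpos _ hx2 k
    rw [norm_div, norm_neg, Real.norm_natCast, norm_pow, norm_of_nonneg (hpos y hy k).le,
      mul_one_div]
    gcongr
    exact (mem_Ioi.1 hy).le
  have hderiv := hasDerivAt_tsum_of_isPreconnected (g := fun (k : ℕ) (y : ℝ) => 1 / (y + k) ^ m)
    (g' := fun (k : ℕ) (y : ℝ) => -(m : ℝ) / (y + k) ^ (m + 1))
    ((summable_one_div_add_pow (by omega : 2 ≤ m + 1) (x / 2)).mul_left (m : ℝ)) isOpen_Ioi
    isPreconnected_Ioi (fun k y hy => hasDerivAt_one_div_add_pow m (hpos y hy k).ne') hbound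
    hx2 (summable_one_div_add_pow hm x) hx2
  simp only [hurwitzSum, ← tsum_mul_left, mul_one_div]
  exact hderiv

noncomputable def digammaSeries (x : ℝ) : ℝ :=
  -eulerMascheroniConstant - 1 / x + ∑' k : ℕ, (1 / ((k : ℝ) + 1) - 1 / (x + (k + 1)))

lemma norm_one_div_sub_one_div_add_le {y : ℝ} (hy : 0 ≤ y) (k : ℕ) :
    ‖1 / ((k : ℝ) + 1) - 1 / (y + (k + 1))‖ ≤ y * (1 / (1 + k) ^ 2) := by
  have hk : (0 : ℝ) < k + 1 := by positivity
  have hyk : 0 < y + (k + 1) := by positivity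
  have hterm : 1 / ((k : ℝ) + 1) - 1 / (y + (k + 1)) = y / ((k + 1) * (y + (k + 1))) := by
    field_simp
    ring
  rw [hterm, norm_of_nonneg (by positivity), mul_one_div, add_comm 1, sq]
  gcongr _ / (_ * ?_)
  linarith

lemma summable_one_div_sub_one_div_add {y : ℝ} (hy : 0 ≤ y) :
    Summable fun k : ℕ => 1 / ((k : ℝ) + 1) - 1 / (y + (k + 1)) :=
  ((summable_one_div_add_pow le_rfl 1).mul_left y).of_norm_bounded
    (norm_one_div_sub_one_div_add_le hy)

lemma hasDerivAt_logGammaSeq {x : ℝ} (hx : 0 < x) (n : ℕ) :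
    HasDerivAt (fun y => BohrMollerup.logGammaSeq y n)
      (log n - harmonic n - 1 / x + ∑ k ∈ Finset.range n, (1 / ((k : ℝ) + 1) - 1 / (x + (k + 1))))
      x := by
  have hlog : ∀ m ∈ Finset.range (n + 1),
      HasDerivAt (fun y => log (y + m)) (1 / (x + m)) x := fun m _ => by
    simpa [one_div] using ((hasDerivAt_id' x).add_const (m : ℝ)).log (by positivity)
  have h := (((hasDerivAt_id' x).mul_const (log n)).add_const (log n.factorial)).sub
    (HasDerivAt.fun_sum hlog)
  refine h.congr_deriv ?_
  rw [Finset.sum_range_succ', harmonic, Finset.sum_sub_distrib]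
  push_cast
  simp only [one_div, add_zero, one_mul]
  ring

lemma tendstoUniformlyOn_deriv_logGammaSeq (b : ℝ) :
    TendstoUniformlyOn
      (fun (n : ℕ) y => log n - harmonic n - 1 / y +
        ∑ k ∈ Finset.range n, (1 / ((k : ℝ) + 1) - 1 / (y + (k + 1))))
      digammaSeries atTop (Ioo 0 b) := by
  have hconst : Tendsto (fun n : ℕ => log n - harmonic n) atTop (𝓝 (-eulerMascheroniConstant)) := by
    simpa using tendsto_harmonic_sub_log.neg
  have hself : TendstoUniformlyOn (fun (_ : ℕ) (y : ℝ) => 1 / y) (fun y => 1 / y) atTop (Ioo 0 b) :=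
    fun _ hu => .of_forall fun _ _ _ => refl_mem_uniformity hu
  refine ((hconst.tendstoUniformlyOn_const _).sub hself).add
    (tendstoUniformlyOn_tsum_nat ((summable_one_div_add_pow le_rfl 1).mul_left b) fun k y hy => ?_)
  exact (norm_one_div_sub_one_div_add_le hy.1.le k).trans (by gcongr; exact hy.2.le)

lemma hasDerivAt_log_Gamma {x : ℝ} (hx : 0 < x) :
    HasDerivAt (fun y => log (Gamma y)) (digammaSeries x) x := by
  have hs : x ∈ Ioo 0 (x + 1) := ⟨hx, lt_add_one x⟩
  exact hasDerivAt_of_tendstoUniformlyOn isOpen_Ioo (tendstoUniformlyOn_deriv_logGammaSeq _)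
    (.of_forall fun n y hy => hasDerivAt_logGammaSeq hy.1 n)
    (fun y hy => BohrMollerup.tendsto_log_gamma hy.1) hs

lemma digamma_eq_digammaSeries {x : ℝ} (hx : 0 < x) : digamma x = digammaSeries x :=
  (hasDerivAt_log_Gamma hx).deriv

lemma hasDerivAt_digammaSeries {x : ℝ} (hx : 0 < x) :
    HasDerivAt digammaSeries (hurwitzSum 2 x) x := by
  have hne : ∀ y ∈ Ioi (0 : ℝ), ∀ k : ℕ, y + ((k : ℝ) + 1) ≠ 0 := fun y hy k => by
    have : 0 < y := hy
    positivity
  have hbound : ∀ (k : ℕ), ∀ y ∈ Ioi (0 : ℝ),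
      ‖1 / (y + ((k : ℝ) + 1)) ^ 2‖ ≤ 1 / (1 + k) ^ 2 := fun k y hy => by
    have : 0 < y := hy
    rw [norm_of_nonneg (by positivity), add_comm 1]
    gcongr 1 / ?_ ^ 2
    linarith
  have hseries := hasDerivAt_tsum_of_isPreconnected
    (g := fun (k : ℕ) (y : ℝ) => 1 / ((k : ℝ) + 1) - 1 / (y + (k + 1)))
    (g' := fun (k : ℕ) (y : ℝ) => 1 / (y + ((k : ℝ) + 1)) ^ 2)
    (summable_one_div_add_pow le_rfl 1) isOpen_Ioi isPreconnected_Ioi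
    (fun k y hy => by simpa [neg_div] using
      (hasDerivAt_one_div_add_pow 1 (hne y hy k)).const_sub (1 / ((k : ℝ) + 1)))
    hbound hx (summable_one_div_sub_one_div_add hx.le) hx
  have hrest : HasDerivAt (fun y => -eulerMascheroniConstant - 1 / y) (1 / x ^ 2) x := by
    simpa [one_div] using ((hasDerivAt_inv hx.ne').const_sub (-eulerMascheroniConstant))
  refine (hrest.add hseries).congr_deriv ?_
  rw [hurwitzSum, (summable_one_div_add_pow le_rfl x).tsum_eq_zero_add]
  push_cast
  simp only [add_zero]

lemma hasDerivAt_digamma {x : ℝ} (hx : 0 < x) : HasDerivAt digamma (hurwitzSum 2 x) x :=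
  (hasDerivAt_digammaSeries hx).congr_of_eventuallyEq <|
    eventually_of_mem (Ioi_mem_nhds hx) fun _ hy => digamma_eq_digammaSeries hy

lemma sub_one_mul_hurwitzSum_three_lt {y : ℝ} (hy : 0 < y) :
    (y - 1) * hurwitzSum 3 y < hurwitzSum 2 y := by
  have hterm : ∀ k : ℕ, (y - 1) * (1 / (y + k) ^ 3) < 1 / (y + k) ^ 2 := fun k => by
    have hyk : 0 < y + k := by positivity
    rw [mul_one_div, div_lt_div_iff₀ (by positivity) (by positivity)]
    nlinarith [pow_pos hyk 2]
  rw [hurwitzSum, hurwitzSum, ← tsum_mul_left]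
  exact Summable.tsum_lt_tsum (fun k => (hterm k).le) (hterm 0)
    ((summable_one_div_add_pow (by norm_num) y).mul_left _) (summable_one_div_add_pow le_rfl y)

section EntropySummand

variable {c A u : ℝ}

lemma hasDerivAt_entropySummand (hu : 0 < c * u + 1) :
    HasDerivAt (fun v => v * (A - digamma (c * v + 1)))
      (A - digamma (c * u + 1) - c * u * hurwitzSum 2 (c * u + 1)) u := by
  have hinner : HasDerivAt (fun v => c * v + 1) c u := by
    simpa using ((hasDerivAt_id u).const_mul c).add_const 1
  have h := (hasDerivAt_id' u).mul (((hasDerivAt_digamma hu).comp u hinner).const_sub A)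
  refine h.congr_deriv ?_
  simp only [Function.comp_def]
  ring

lemma hasDerivAt_deriv_entropySummand (hu : 0 < c * u + 1) :
    HasDerivAt (deriv fun v => v * (A - digamma (c * v + 1)))
      (-2 * c * (hurwitzSum 2 (c * u + 1) - c * u * hurwitzSum 3 (c * u + 1))) u := by
  have hinner : HasDerivAt (fun v => c * v + 1) c u := by
    simpa using ((hasDerivAt_id u).const_mul c).add_const 1
  have hdigamma := ((hasDerivAt_digamma hu).comp u hinner).const_sub A
  have hhurwitz := (hasDerivAt_hurwitzSum le_rfl hu).comp u hinner
  have h := hdigamma.sub (((hasDerivAt_id' u).const_mul c).mul hhurwitz)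
  have hopen : IsOpen {v | 0 < c * v + 1} := isOpen_lt continuous_const (by fun_prop)
  refine (h.congr_of_eventuallyEq ?_).congr_deriv ?_
  · exact eventually_of_mem (hopen.mem_nhds hu) fun v hv => (hasDerivAt_entropySummand hv).deriv
  · simp only [Function.comp_def]
    push_cast
    ring

end EntropySummand

/-- The expected-entropy summand
`h(u) = u (ψ(n+s+1) − ψ((n+s)u+1))` is strictly concave on `(0,1)`,
i.e. `h''(u) < 0` there. -/
theorem idm_entropy_summand_strictly_concave
    (n s : ℝ) (hns : 0 < n + s)
    (h : ℝ → ℝ)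
    (hh : h = fun u => u * (digamma (n + s + 1) - digamma ((n + s) * u + 1))) :
    StrictConcaveOn ℝ (Set.Ioo (0:ℝ) 1) h ∧
      ∀ u ∈ Set.Ioo (0:ℝ) 1, iteratedDeriv 2 h u < 0 := by
  subst hh
  have hpos : ∀ u ∈ Ioo (0 : ℝ) 1, 0 < (n + s) * u + 1 := fun u hu => by
    have := hu.1
    positivity
  have hneg : ∀ u ∈ Ioo (0 : ℝ) 1,
      deriv^[2] (fun u => u * (digamma (n + s + 1) - digamma ((n + s) * u + 1))) u < 0 := by
    intro u hu
    rw [Function.iterate_succ_apply, Function.iterate_one,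
      (hasDerivAt_deriv_entropySummand (hpos u hu)).deriv]
    have hlt := sub_one_mul_hurwitzSum_three_lt (hpos u hu)
    rw [add_sub_cancel_right] at hlt
    exact mul_neg_of_neg_of_pos (by linarith) (sub_pos.2 hlt)
  refine ⟨strictConcaveOn_of_deriv2_neg' (convex_Ioo 0 1) (fun u hu => ?_) hneg,
    fun u hu => by rw [iteratedDeriv_eq_iterate]; exact hneg u hu⟩
  exact (hasDerivAt_entropySummand (hpos u hu)).continuousAt.continuousWithinAt
end

section
/- Robust credible interval for translated triangular densities: for p_t(x) = max{0, 1−|x−t|}, t ∈ [−γ, γ], γ > 0, 1/2 ≤ α < 1, the minimal-length interval A (symmetric about 0) satisfying ∫_A p_t ≥ α for all t ∈ [−γ,γ] is [−1+√(1−α−γ²), 1−√(1−α−γ²)] if γ² ≤ (1−α)/2, and [−γ−1+√(2(1−α)), γ+1−√(2(1−α))] if γ² ≥ (1−α)/2; in both cases this interval is strictly shorter than the union ∪_t A_t^{min} = [−γ−1+√(1−α), γ+1−√(1−α)] for every γ > 0. -/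
/-!
With `F` the distribution function of the triangular density, `∫ p_t` over `[a, b]` is
`F (b - t) - F (a - t)`. Since `α ≥ 1/2`, mass `α` forces `a ≤ t ≤ b`, and the missing mass is then
`T (b - t) + T (t - a)` with `T y = (1 - y)₊² / 2`; robust coverage becomes the algebraic condition
`T (b - t) + T (t - a) ≤ 1 - α` for `|t| ≤ γ`. Lower bounds on the length only use the extreme
translates `t = ±γ`: for small `γ` the four tails at `±γ` are added in pairs and
`u² + v² ≥ (u + v)² / 2` is applied, for large `γ` each extreme translate alone pushes one endpoint out.
-/

open Set Filter

theorem hasDerivAt_max_zero_sq (x : ℝ) :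
    HasDerivAt (fun y : ℝ => (max 0 y) ^ 2) (2 * max 0 x) x := by
  have hneg : ∀ y ≤ (0 : ℝ), (max 0 y) ^ 2 = 0 := fun y hy => by simp [max_eq_left hy]
  have hpos : ∀ y, (0 : ℝ) ≤ y → (max 0 y) ^ 2 = y ^ 2 := fun y hy => by rw [max_eq_right hy]
  rcases lt_trichotomy x 0 with hx | rfl | hx
  · rw [max_eq_left hx.le, mul_zero]
    exact (hasDerivAt_const x 0).congr_of_eventuallyEq
      (eventually_of_mem (Iio_mem_nhds hx) fun y hy => hneg y (le_of_lt hy))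
  · have hl : HasDerivWithinAt (fun y : ℝ => (max 0 y) ^ 2) 0 (Iic 0) 0 :=
      (hasDerivWithinAt_const 0 _ 0).congr (fun y hy => hneg y hy) (hneg 0 le_rfl)
    have hr : HasDerivWithinAt (fun y : ℝ => (max 0 y) ^ 2) 0 (Ici 0) 0 := by
      simpa using ((hasDerivAt_pow 2 (0 : ℝ)).hasDerivWithinAt (s := Ici 0)).congr
        (fun y hy => hpos y hy) (hpos 0 le_rfl)
    simpa [Iic_union_Ici] using hl.union hr
  · rw [max_eq_right hx.le]
    simpa using (hasDerivAt_pow 2 x).congr_of_eventuallyEq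
      (eventually_of_mem (Ioi_mem_nhds hx) fun y hy => hpos y (le_of_lt hy))

theorem max_zero_one_sub_abs (x : ℝ) :
    max 0 (1 - |x|) = max 0 (x + 1) - 2 * max 0 x + max 0 (x - 1) := by
  rcases abs_cases x with ⟨hx, _⟩ | ⟨hx, _⟩ <;> rw [hx] <;> simp only [max_def] <;>
    split_ifs <;> linarith

/-- The distribution function of `max 0 (1 - |x|)`, written with truncated powers (a quadratic
B-spline) so that it is differentiable without case distinctions. -/
noncomputable def triCDF (x : ℝ) : ℝ :=
  ((max 0 (x + 1)) ^ 2 - 2 * (max 0 x) ^ 2 + (max 0 (x - 1)) ^ 2) / 2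

/-- For `0 ≤ y`, the mass of `(y, ∞)` under `max 0 (1 - |x|)`. -/
noncomputable def triTail (y : ℝ) : ℝ := (max 0 (1 - y)) ^ 2 / 2

theorem hasDerivAt_triCDF (x : ℝ) : HasDerivAt triCDF (max 0 (1 - |x|)) x := by
  have h := ((((hasDerivAt_max_zero_sq (x + 1)).comp x ((hasDerivAt_id x).add_const 1)).sub
    ((hasDerivAt_max_zero_sq x).const_mul 2)).add
    ((hasDerivAt_max_zero_sq (x - 1)).comp x ((hasDerivAt_id x).sub_const 1))).div_const 2
  exact h.congr_deriv (by rw [max_zero_one_sub_abs]; ring)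

theorem integral_triangle (t a b : ℝ) :
    ∫ x in a..b, max 0 (1 - |x - t|) = triCDF (b - t) - triCDF (a - t) := by
  refine intervalIntegral.integral_eq_sub_of_hasDerivAt (f := fun x => triCDF (x - t))
    (fun x _ => ?_) ?_
  · exact (hasDerivAt_triCDF (x - t)).comp_sub_const x t
  · exact (continuous_const.max (continuous_const.sub
      (continuous_id.sub continuous_const).abs)).intervalIntegrable a b

theorem triCDF_of_nonpos {x : ℝ} (hx : x ≤ 0) : triCDF x = triTail (-x) := by
  rw [triCDF, triTail, max_eq_left hx, max_eq_left (by linarith : x - 1 ≤ 0), sub_neg_eq_add,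
    add_comm 1 x]
  ring

theorem triCDF_of_nonneg {x : ℝ} (hx : 0 ≤ x) : triCDF x = 1 - triTail x := by
  rw [triCDF, triTail, max_eq_right (by linarith : 0 ≤ x + 1), max_eq_right hx]
  rcases le_total x 1 with h | h
  · rw [max_eq_left (by linarith : x - 1 ≤ 0), max_eq_right (by linarith : 0 ≤ 1 - x)]; ring
  · rw [max_eq_right (by linarith : 0 ≤ x - 1), max_eq_left (by linarith : 1 - x ≤ 0)]; ring

theorem triTail_nonneg (y : ℝ) : 0 ≤ triTail y := by unfold triTail; positivity

theorem triTail_le_half {y : ℝ} (hy : 0 ≤ y) : triTail y ≤ 1 / 2 := by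
  have : max 0 (1 - y) ≤ 1 := max_le zero_le_one (by linarith)
  unfold triTail; nlinarith [le_max_left 0 (1 - y)]

theorem triTail_lt_half {y : ℝ} (hy : 0 < y) : triTail y < 1 / 2 := by
  have : max 0 (1 - y) < 1 := max_lt zero_lt_one (by linarith)
  unfold triTail; nlinarith [le_max_left 0 (1 - y)]

theorem triCDF_nonneg (x : ℝ) : 0 ≤ triCDF x := by
  rcases le_total x 0 with hx | hx
  · rw [triCDF_of_nonpos hx]; exact triTail_nonneg _
  · rw [triCDF_of_nonneg hx]; linarith [triTail_le_half hx]

theorem triCDF_le_one (x : ℝ) : triCDF x ≤ 1 := by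
  rcases le_total x 0 with hx | hx
  · rw [triCDF_of_nonpos hx]; linarith [triTail_le_half (neg_nonneg.2 hx)]
  · rw [triCDF_of_nonneg hx]; linarith [triTail_nonneg x]

theorem le_integral_triangle_iff {α a b t : ℝ} (hα : 1 / 2 ≤ α) :
    α ≤ ∫ x in a..b, max 0 (1 - |x - t|) ↔
      t ∈ Icc a b ∧ triTail (b - t) + triTail (t - a) ≤ 1 - α := by
  rw [integral_triangle]
  constructor
  · intro h
    have hb : t ≤ b := by
      by_contra! hb
      have := triTail_lt_half (sub_pos.2 hb)
      rw [← neg_sub, ← triCDF_of_nonpos (by linarith)] at this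
      linarith [triCDF_nonneg (a - t)]
    have ha : a ≤ t := by
      by_contra! ha
      have := triTail_lt_half (sub_pos.2 ha)
      rw [← sub_sub_cancel 1 (triTail _), ← triCDF_of_nonneg (by linarith)] at this
      linarith [triCDF_le_one (b - t)]
    rw [triCDF_of_nonneg (sub_nonneg.2 hb), triCDF_of_nonpos (sub_nonpos.2 ha), neg_sub] at h
    exact ⟨⟨ha, hb⟩, by linarith⟩
  · rintro ⟨⟨ha, hb⟩, h⟩
    rw [triCDF_of_nonneg (sub_nonneg.2 hb), triCDF_of_nonpos (sub_nonpos.2 ha), neg_sub]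
    linarith

def IsRobustCredible (γ α a b : ℝ) : Prop :=
  ∀ t ∈ Icc (-γ) γ, α ≤ ∫ x in a..b, max 0 (1 - |x - t|)

theorem isRobustCredible_iff {γ α a b : ℝ} (hα : 1 / 2 ≤ α) :
    IsRobustCredible γ α a b ↔
      ∀ t ∈ Icc (-γ) γ, t ∈ Icc a b ∧ triTail (b - t) + triTail (t - a) ≤ 1 - α :=
  forall₂_congr fun _ _ => le_integral_triangle_iff hα

theorem triTail_of_le_one {y : ℝ} (hy : y ≤ 1) : triTail y = (1 - y) ^ 2 / 2 := by
  rw [triTail, max_eq_right (by linarith)]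

theorem one_sub_le_sqrt_of_triTail_le {y c : ℝ} (h : triTail y ≤ c) : 1 - y ≤ √(2 * c) :=
  (le_max_right 0 _).trans (Real.le_sqrt_of_sq_le (by unfold triTail at h; linarith))

theorem isRobustCredible_of_sq_le {γ α : ℝ} (hα : 1 / 2 ≤ α) (hγα : γ ^ 2 ≤ (1 - α) / 2) :
    IsRobustCredible γ α (-1 + √(1 - α - γ ^ 2)) (1 - √(1 - α - γ ^ 2)) := by
  set s := √(1 - α - γ ^ 2)
  have hs : s ^ 2 = 1 - α - γ ^ 2 := Real.sq_sqrt (by linarith [sq_nonneg γ])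
  have hs0 : 0 ≤ s := Real.sqrt_nonneg _
  rw [isRobustCredible_iff hα]
  rintro t ⟨ht₁, ht₂⟩
  have hγs : γ ≤ s := abs_le_of_sq_le_sq' (by linarith) hs0 |>.2
  have hsγ : s + γ ≤ 1 := by nlinarith [sq_nonneg (s - γ)]
  refine ⟨⟨by linarith, by linarith⟩, ?_⟩
  rw [triTail_of_le_one (by linarith), triTail_of_le_one (by linarith)]
  nlinarith

theorem IsRobustCredible.two_sub_two_sqrt_le {γ α a b : ℝ} (hα : 1 / 2 ≤ α) (hγ : 0 ≤ γ)
    (hγα : γ ^ 2 ≤ (1 - α) / 2) (h : IsRobustCredible γ α a b) :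
    2 - 2 * √(1 - α - γ ^ 2) ≤ b - a := by
  set s := √(1 - α - γ ^ 2)
  have hs : s ^ 2 = 1 - α - γ ^ 2 := Real.sq_sqrt (by linarith [sq_nonneg γ])
  have hγs : γ ≤ s := abs_le_of_sq_le_sq' (by linarith) (Real.sqrt_nonneg _) |>.2
  rw [isRobustCredible_iff hα] at h
  obtain ⟨-, hright⟩ := h γ ⟨by linarith, le_rfl⟩
  obtain ⟨-, hleft⟩ := h (-γ) ⟨le_rfl, by linarith⟩
  unfold triTail at hright hleft
  set u₁ := max 0 (1 - (b - γ))
  set u₂ := max 0 (1 - (γ - a))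
  set u₃ := max 0 (1 - (b - -γ))
  set u₄ := max 0 (1 - (-γ - a))
  have h₁ : 1 - (b - γ) ≤ u₁ := le_max_right _ _
  have h₂ : 1 - (γ - a) ≤ u₂ := le_max_right _ _
  have h₃ : 1 - (b - -γ) ≤ u₃ := le_max_right _ _
  have h₄ : 1 - (-γ - a) ≤ u₄ := le_max_right _ _
  by_contra! hlt
  have h₁₄ : 2 * s + 2 * γ < u₁ + u₄ := by linarith
  have h₂₃ : 2 * s - 2 * γ < u₂ + u₃ := by linarith
  nlinarith [sq_nonneg (u₁ - u₄), sq_nonneg (u₂ - u₃)]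

theorem isRobustCredible_of_le_sq {γ α : ℝ} (hα : 1 / 2 ≤ α) (hα1 : α ≤ 1)
    (hγα : (1 - α) / 2 ≤ γ ^ 2) :
    IsRobustCredible γ α (-γ - 1 + √(2 * (1 - α))) (γ + 1 - √(2 * (1 - α))) := by
  set s := √(2 * (1 - α))
  have hs : s ^ 2 = 2 * (1 - α) := Real.sq_sqrt (by linarith)
  have hs0 : 0 ≤ s := Real.sqrt_nonneg _
  have hs1 : s ≤ 1 := Real.sqrt_le_one.2 (by linarith)
  rw [isRobustCredible_iff hα]
  rintro t ⟨ht₁, ht₂⟩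
  have hs2γ : s ≤ 2 * γ := abs_le_of_sq_le_sq' (by linarith) (by linarith) |>.2
  refine ⟨⟨by linarith, by linarith⟩, ?_⟩
  unfold triTail
  set u := max 0 (1 - (γ + 1 - s - t))
  set v := max 0 (1 - (t - (-γ - 1 + s)))
  -- each tail is at most `s`, and when both are positive they add up to `2 s - 2 γ ≤ s`
  have hsum : u + v ≤ s := by
    simp only [u, v, max_def]
    split_ifs <;> linarith
  nlinarith [le_max_left 0 (1 - (γ + 1 - s - t)), le_max_left 0 (1 - (t - (-γ - 1 + s)))]

theorem IsRobustCredible.two_mul_add_two_sub_two_sqrt_le {γ α a b : ℝ} (hα : 1 / 2 ≤ α)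
    (hγ : 0 ≤ γ) (h : IsRobustCredible γ α a b) :
    2 * γ + 2 - 2 * √(2 * (1 - α)) ≤ b - a := by
  rw [isRobustCredible_iff hα] at h
  obtain ⟨-, hright⟩ := h γ ⟨by linarith, le_rfl⟩
  obtain ⟨-, hleft⟩ := h (-γ) ⟨le_rfl, by linarith⟩
  have hb := one_sub_le_sqrt_of_triTail_le (y := b - γ) (c := 1 - α)
    (by linarith [triTail_nonneg (γ - a)])
  have ha := one_sub_le_sqrt_of_triTail_le (y := -γ - a) (c := 1 - α)
    (by linarith [triTail_nonneg (b - -γ)])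
  linarith

theorem sqrt_lt_add_sqrt_sub_sq {ε γ : ℝ} (hγ : 0 < γ) (h : γ ^ 2 < ε) :
    √ε < γ + √(ε - γ ^ 2) := by
  have hs : 0 < √(ε - γ ^ 2) := Real.sqrt_pos.2 (by linarith)
  rw [Real.sqrt_lt' (by positivity)]
  nlinarith [Real.sq_sqrt (by linarith : 0 ≤ ε - γ ^ 2)]

/-- Robust credible intervals for translated triangular densities
`p_t(x) = max{0, 1 − |x − t|}`, `t ∈ [−γ, γ]`, `1/2 ≤ α < 1`. The minimal-length
interval with `p_t`-mass ≥ α for all `t` is `[−1+√(1−α−γ²), 1−√(1−α−γ²)]` when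
`γ² ≤ (1−α)/2` and `[−γ−1+√(2(1−α)), γ+1−√(2(1−α))]` when `γ² ≥ (1−α)/2`; in both
cases it is strictly shorter than the union `∪_t A_t^min = [−γ−1+√(1−α), γ+1−√(1−α)]`. -/
theorem triangular_robust_credible_interval
    (γ α : ℝ) (hγ : 0 < γ) (hα : 1/2 ≤ α) (hα1 : α < 1)
    (p : ℝ → ℝ → ℝ) (hp : p = fun t x => max 0 (1 - |x - t|)) :
    (γ ^ 2 ≤ (1 - α) / 2 →
      ∀ a b : ℝ, a = -1 + Real.sqrt (1 - α - γ ^ 2) → b = 1 - Real.sqrt (1 - α - γ ^ 2) →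
        (∀ t ∈ Set.Icc (-γ) γ, α ≤ ∫ x in a..b, p t x) ∧
        (∀ a' b' : ℝ, a' ≤ b' → (∀ t ∈ Set.Icc (-γ) γ, α ≤ ∫ x in a'..b', p t x) →
          b - a ≤ b' - a') ∧
        b - a < (γ + 1 - Real.sqrt (1 - α)) - (-γ - 1 + Real.sqrt (1 - α))) ∧
    ((1 - α) / 2 ≤ γ ^ 2 →
      ∀ a b : ℝ, a = -γ - 1 + Real.sqrt (2 * (1 - α)) →
        b = γ + 1 - Real.sqrt (2 * (1 - α)) →
        (∀ t ∈ Set.Icc (-γ) γ, α ≤ ∫ x in a..b, p t x) ∧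
        (∀ a' b' : ℝ, a' ≤ b' → (∀ t ∈ Set.Icc (-γ) γ, α ≤ ∫ x in a'..b', p t x) →
          b - a ≤ b' - a') ∧
        b - a < (γ + 1 - Real.sqrt (1 - α)) - (-γ - 1 + Real.sqrt (1 - α))) := by
  subst hp
  refine ⟨fun hγα a b ha hb => ?_, fun hγα a b ha hb => ?_⟩ <;> subst ha hb
  · refine ⟨isRobustCredible_of_sq_le hα hγα, fun a' b' _ h => ?_, ?_⟩
    · linarith [IsRobustCredible.two_sub_two_sqrt_le hα hγ.le hγα h]
    · linarith [sqrt_lt_add_sqrt_sub_sq hγ (by linarith : γ ^ 2 < 1 - α)]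
  · refine ⟨isRobustCredible_of_le_sq hα hα1.le hγα, fun a' b' _ h => ?_, ?_⟩
    · linarith [IsRobustCredible.two_mul_add_two_sub_two_sqrt_le hα hγ.le h]
    · linarith [Real.sqrt_lt_sqrt (by linarith : 0 ≤ 1 - α) (by linarith : 1 - α < 2 * (1 - α))]
end
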